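/- Let $P(z,\xi,\nu) = \sum_{m+n+p = \alpha} p_{mnp} z^m \xi^n \nu^p$ be a nonzero homogeneous polynomial of degree $\alpha \geq 1$ over $\mathbb{C}$, and let $P^{\star} = \sum_{m+n+p=\alpha} \overline{p_{mnp}}\, \partial^{\alpha}/(\partial z^m \partial \xi^n \partial \nu^p)$ be the associated differential operator with conjugated coefficients. Then every formal power series $F(z,\xi,\nu) \in \mathbb{C}[[z,\xi,\nu]]$ admits a decomposition $F = G \cdot P + H$ with $G, H \in \mathbb{C}[[z,\xi,\nu]]$ and $P^{\star}(H) = 0$, and this decomposition is unique: if $G_1 P + H_1 = G_2 P + H_2$ with $P^{\star}(H_1) = P^{\star}(H_2) = 0$, then $G_1 = G_2$ and $H_1 = H_2$. -/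

import Mathlib

open MvPowerSeries

noncomputable section

/-- The Fischer differential operator `P⋆ = ∑_{m+n+p=α} conj(p_{mnp}) ∂^α/∂z^m ∂ξ^n ∂ν^p`
associated to a polynomial `P = ∑ p_{mnp} z^m ξ^n ν^p`, acting termwise on formal power
series in the three variables `z = X 0`, `ξ = X 1`, `ν = X 2`. -/
noncomputable def fischerStar (P : MvPolynomial (Fin 3) ℂ)
    (F : MvPowerSeries (Fin 3) ℂ) : MvPowerSeries (Fin 3) ℂ :=
  fun e => ∑ s ∈ P.support,
    (starRingEnd ℂ) (MvPolynomial.coeff s P) *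
      (∏ i, ((e i + s i).descFactorial (s i) : ℂ)) *
      MvPowerSeries.coeff (e + s) F

namespace FischerAux

abbrev Idx := Fin 3 →₀ ℕ

def degF (e : Idx) : ℕ := ∑ i, e i

lemma degF_eq_degree (e : Idx) : degF e = e.degree := by
  unfold degF Finsupp.degree
  exact (Finset.sum_subset (Finset.subset_univ _)
    (fun i _ hi => Finsupp.notMem_support_iff.mp hi)).symm

lemma degF_add (e s : Idx) : degF (e + s) = degF e + degF s := by
  unfold degF
  simp [Finsupp.add_apply, Finset.sum_add_distrib]

lemma apply_le_degF (e : Idx) (i : Fin 3) : e i ≤ degF e := by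
  rw [degF_eq_degree]; exact Finsupp.le_degree i e

instance fintypeDeg (d : ℕ) : Fintype {e : Idx // degF e = d} :=
  Fintype.ofInjective
    (fun e => (fun i => (⟨e.1 i, by
      have := apply_le_degF e.1 i; omega⟩ : Fin (d + 1)) : Fin 3 → Fin (d + 1)))
    (by
      intro a b hab
      apply Subtype.ext
      apply Finsupp.ext
      intro i
      have := congrFun hab i
      simpa using congrArg Fin.val this)

abbrev V (d : ℕ) := {e : Idx // degF e = d} → ℂ

variable (α : ℕ) (P : MvPolynomial (Fin 3) ℂ)

/-- degree of monomials in the support of a homogeneous polynomial -/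
lemma degF_support (hhom : P.IsHomogeneous α) {s : Idx} (hs : s ∈ P.support) :
    degF s = α := by
  rw [degF_eq_degree, Finsupp.degree_eq_weight_one]
  exact hhom (MvPolynomial.mem_support_iff.mp hs)

def wfac (e s : Idx) : ℂ := ∏ i, ((e i + s i).descFactorial (s i) : ℂ)

def fprod (e : Idx) : ℕ := ∏ i, (e i).factorial

def Tfun (d : ℕ) (g : V d) : V (d + α) := fun E =>
  ∑ s ∈ P.support, MvPolynomial.coeff s P *
    (if h : s ≤ E.1 ∧ degF (E.1 - s) = d then g ⟨E.1 - s, h.2⟩ else 0)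

def Sfun (d : ℕ) (h : V (d + α)) : V d := fun e =>
  ∑ s ∈ P.support, (starRingEnd ℂ) (MvPolynomial.coeff s P) * wfac e.1 s *
    (if hd : degF (e.1 + s) = d + α then h ⟨e.1 + s, hd⟩ else 0)

def Tlin (d : ℕ) : V d →ₗ[ℂ] V (d + α) where
  toFun := Tfun α P d
  map_add' g₁ g₂ := funext fun E => by
    simp only [Tfun, Pi.add_apply, ← Finset.sum_add_distrib]
    refine Finset.sum_congr rfl fun s _ => ?_
    split <;> ring
  map_smul' c g := funext fun E => by
    simp only [Tfun, Pi.smul_apply, smul_eq_mul, RingHom.id_apply, Finset.mul_sum]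
    refine Finset.sum_congr rfl fun s _ => ?_
    split <;> ring

def Slin (d : ℕ) : V (d + α) →ₗ[ℂ] V d where
  toFun := Sfun α P d
  map_add' h₁ h₂ := funext fun e => by
    simp only [Sfun, Pi.add_apply, ← Finset.sum_add_distrib]
    refine Finset.sum_congr rfl fun s _ => ?_
    split <;> ring
  map_smul' c h := funext fun e => by
    simp only [Sfun, Pi.smul_apply, smul_eq_mul, RingHom.id_apply, Finset.mul_sum]
    refine Finset.sum_congr rfl fun s _ => ?_
    split <;> ring

def B (d : ℕ) (f g : V d) : ℂ :=
  ∑ e, (starRingEnd ℂ) (f e) * g e * (fprod e.1 : ℂ)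

lemma B_zero_right (d : ℕ) (f : V d) : B d f 0 = 0 := by
  unfold B; simp

lemma eq_zero_of_B_self (d : ℕ) (f : V d) (h : B d f f = 0) : f = 0 := by
  have hre : ((∑ e, Complex.normSq (f e) * (fprod e.1 : ℝ) : ℝ) : ℂ) = 0 := by
    rw [← h]
    unfold B
    push_cast
    refine Finset.sum_congr rfl fun e _ => ?_
    rw [← Complex.normSq_eq_conj_mul_self]
  rw [Complex.ofReal_eq_zero] at hre
  have hnn : ∀ e ∈ Finset.univ, (0:ℝ) ≤ Complex.normSq (f e) * (fprod e.1 : ℝ) :=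
    fun e _ => mul_nonneg (Complex.normSq_nonneg _) (Nat.cast_nonneg _)
  have := (Finset.sum_eq_zero_iff_of_nonneg hnn).mp hre
  funext e
  have he := this e (Finset.mem_univ e)
  have hf : (0:ℝ) < (fprod e.1 : ℝ) := by
    have : 0 < fprod e.1 := Finset.prod_pos fun i _ => Nat.factorial_pos _
    exact_mod_cast this
  have : Complex.normSq (f e) = 0 := by
    rcases mul_eq_zero.mp he with h' | h'
    · exact h'
    · exact absurd h' (ne_of_gt hf)
  simpa using Complex.normSq_eq_zero.mp this

lemma sum_delta {D : ℕ} (c : Idx) (hc : degF c = D) (A : {e : Idx // degF e = D} → ℂ) :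
    ∑ E : {e : Idx // degF e = D}, (if c = E.1 then A E else 0) = A ⟨c, hc⟩ := by
  rw [Finset.sum_eq_single (⟨c, hc⟩ : {e : Idx // degF e = D})]
  · rw [if_pos rfl]
  · intro E _ hne
    rw [if_neg]
    intro heq
    exact hne (Subtype.ext heq.symm)
  · intro hmem; exact absurd (Finset.mem_univ _) hmem

lemma dite_eq_sum (d : ℕ) (s : Idx) {D : ℕ} (E : {e : Idx // degF e = D}) (g : V d) :
    (if h : s ≤ E.1 ∧ degF (E.1 - s) = d then g ⟨E.1 - s, h.2⟩ else 0)
      = ∑ e : {e : Idx // degF e = d}, if e.1 + s = E.1 then g e else 0 := by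
  by_cases h : s ≤ E.1 ∧ degF (E.1 - s) = d
  · rw [dif_pos h, Finset.sum_eq_single (⟨E.1 - s, h.2⟩ : {e : Idx // degF e = d})]
    · rw [if_pos (tsub_add_cancel_of_le h.1)]
    · rintro e - hne
      rw [if_neg]
      intro heq
      have : e.1 = E.1 - s := by rw [← heq, add_tsub_cancel_right]
      exact hne (Subtype.ext this)
    · intro hmem; exact absurd (Finset.mem_univ _) hmem
  · rw [dif_neg h, eq_comm]
    apply Finset.sum_eq_zero
    rintro e -
    rw [if_neg]
    intro heq
    exact h ⟨heq ▸ le_add_self, by rw [← heq, add_tsub_cancel_right]; exact e.2⟩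

lemma wfac_mul_fprod (e s : Idx) :
    wfac e s * (fprod e : ℂ) = (fprod (e + s) : ℂ) := by
  have hnat : (∏ i, (e i + s i).descFactorial (s i)) * fprod e = fprod (e + s) := by
    unfold fprod
    rw [← Finset.prod_mul_distrib]
    refine Finset.prod_congr rfl fun i _ => ?_
    rw [Finsupp.add_apply]
    have h2 := Nat.factorial_mul_descFactorial (n := e i + s i) (k := s i)
      (Nat.le_add_left _ _)
    rw [Nat.add_sub_cancel] at h2
    rw [mul_comm]; exact h2
  unfold wfac
  rw [show (∏ i, ((e i + s i).descFactorial (s i) : ℂ))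
      = ((∏ i, (e i + s i).descFactorial (s i) : ℕ) : ℂ) by push_cast; rfl,
    ← Nat.cast_mul, hnat]

lemma adjoint_id (hhom : P.IsHomogeneous α) (d : ℕ) (g : V d) (h : V (d + α)) :
    B (d + α) (Tfun α P d g) h = B d g (Sfun α P d h) := by
  unfold B Tfun Sfun
  set M : ℂ := ∑ s ∈ P.support, ∑ e : {e : Idx // degF e = d},
    (starRingEnd ℂ) (MvPolynomial.coeff s P) * (starRingEnd ℂ) (g e) *
      (if hd : degF (e.1 + s) = d + α then h ⟨e.1 + s, hd⟩ else 0) * (fprod (e.1 + s) : ℂ)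
    with hM
  have lhs_eq : ∀ E : {e : Idx // degF e = d + α},
      (starRingEnd ℂ) (∑ s ∈ P.support, MvPolynomial.coeff s P *
          (if h' : s ≤ E.1 ∧ degF (E.1 - s) = d then g ⟨E.1 - s, h'.2⟩ else 0)) * h E
        * (fprod E.1 : ℂ)
      = ∑ s ∈ P.support, ∑ e : {e : Idx // degF e = d},
          (if e.1 + s = E.1 then
            (starRingEnd ℂ) (MvPolynomial.coeff s P) * (starRingEnd ℂ) (g e) * h E
              * (fprod E.1 : ℂ) else 0) := by
    intro E
    rw [map_sum, Finset.sum_mul, Finset.sum_mul]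
    refine Finset.sum_congr rfl fun s hs => ?_
    rw [dite_eq_sum (g := g) (s := s) (E := E), map_mul, map_sum, Finset.mul_sum,
      Finset.sum_mul, Finset.sum_mul]
    refine Finset.sum_congr rfl fun e _ => ?_
    split
    · ring
    · simp
  have L : (∑ E : {e : Idx // degF e = d + α},
      (starRingEnd ℂ) (∑ s ∈ P.support, MvPolynomial.coeff s P *
          (if h' : s ≤ E.1 ∧ degF (E.1 - s) = d then g ⟨E.1 - s, h'.2⟩ else 0)) * h E
        * (fprod E.1 : ℂ)) = M := by
    rw [Finset.sum_congr rfl fun E _ => lhs_eq E, hM, Finset.sum_comm]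
    refine Finset.sum_congr rfl fun s hs => ?_
    rw [Finset.sum_comm]
    refine Finset.sum_congr rfl fun e _ => ?_
    have hds : degF s = α := degF_support α P hhom hs
    have hc : degF (e.1 + s) = d + α := by rw [degF_add, e.2, hds]
    rw [dif_pos hc]
    exact sum_delta (e.1 + s) hc
      (fun E => (starRingEnd ℂ) (MvPolynomial.coeff s P) * (starRingEnd ℂ) (g e) * h E
        * (fprod E.1 : ℂ))
  have R : (∑ e : {e : Idx // degF e = d},
      (starRingEnd ℂ) (g e) * (∑ s ∈ P.support,
          (starRingEnd ℂ) (MvPolynomial.coeff s P) * wfac e.1 s *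
          (if hd : degF (e.1 + s) = d + α then h ⟨e.1 + s, hd⟩ else 0)) * (fprod e.1 : ℂ))
      = M := by
    have rhs_eq : ∀ e : {e : Idx // degF e = d},
        (starRingEnd ℂ) (g e) * (∑ s ∈ P.support,
            (starRingEnd ℂ) (MvPolynomial.coeff s P) * wfac e.1 s *
            (if hd : degF (e.1 + s) = d + α then h ⟨e.1 + s, hd⟩ else 0)) * (fprod e.1 : ℂ)
        = ∑ s ∈ P.support, (starRingEnd ℂ) (g e) *
            ((starRingEnd ℂ) (MvPolynomial.coeff s P) * wfac e.1 s *
              (if hd : degF (e.1 + s) = d + α then h ⟨e.1 + s, hd⟩ else 0)) * (fprod e.1 : ℂ) := by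
      intro e
      rw [Finset.mul_sum, Finset.sum_mul]
    rw [Finset.sum_congr rfl fun e _ => rhs_eq e, hM, Finset.sum_comm]
    refine Finset.sum_congr rfl fun s hs => ?_
    refine Finset.sum_congr rfl fun e _ => ?_
    rw [← wfac_mul_fprod]
    ring
  rw [L]
  exact R.symm

open Module in
lemma decomp_aux {V' W : Type} [AddCommGroup V'] [Module ℂ V'] [AddCommGroup W] [Module ℂ W]
    [FiniteDimensional ℂ V'] [FiniteDimensional ℂ W]
    (T : V' →ₗ[ℂ] W) (S : W →ₗ[ℂ] V')
    (h1 : ∀ v, S (T v) = 0 → T v = 0) (h2 : ∀ w, T (S w) = 0 → S w = 0) (w : W) :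
    ∃ v h, w = T v + h ∧ S h = 0 := by
  have hker2 : LinearMap.ker (T ∘ₗ S) = LinearMap.ker S := by
    apply le_antisymm
    · intro x hx
      rw [LinearMap.mem_ker] at hx ⊢
      exact h2 x hx
    · intro x hx
      rw [LinearMap.mem_ker] at hx ⊢
      rw [LinearMap.comp_apply, hx, map_zero]
  have hdisj : LinearMap.range T ⊓ LinearMap.ker S = ⊥ := by
    rw [eq_bot_iff]
    rintro x ⟨hxr, hxk⟩
    obtain ⟨v, rfl⟩ := hxr
    have hxk' : S (T v) = 0 := hxk
    exact h1 v hxk'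
  have e1 : finrank ℂ (LinearMap.range (T ∘ₗ S)) + finrank ℂ (LinearMap.ker S)
      = finrank ℂ W := by
    rw [← hker2]
    exact LinearMap.finrank_range_add_finrank_ker (T ∘ₗ S)
  have e2 : finrank ℂ (LinearMap.range (T ∘ₗ S)) ≤ finrank ℂ (LinearMap.range T) :=
    Submodule.finrank_mono (LinearMap.range_comp_le_range S T)
  have e3 : finrank ℂ W ≤ finrank ℂ (LinearMap.range T) + finrank ℂ (LinearMap.ker S) := by
    omega
  have e4 : finrank ℂ (LinearMap.range T ⊔ LinearMap.ker S : Submodule ℂ W)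
      = finrank ℂ (LinearMap.range T) + finrank ℂ (LinearMap.ker S) := by
    have := Submodule.finrank_sup_add_finrank_inf_eq (LinearMap.range T) (LinearMap.ker S)
    rw [hdisj, finrank_bot] at this
    omega
  have htop : LinearMap.range T ⊔ LinearMap.ker S = ⊤ := by
    apply Submodule.eq_top_of_finrank_eq
    have := Submodule.finrank_le (LinearMap.range T ⊔ LinearMap.ker S : Submodule ℂ W)
    omega
  have hw : w ∈ LinearMap.range T ⊔ LinearMap.ker S := htop ▸ Submodule.mem_top
  obtain ⟨y, hy, z, hz, rfl⟩ := Submodule.mem_sup.mp hw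
  obtain ⟨v, rfl⟩ := hy
  exact ⟨v, z, rfl, hz⟩

lemma T_eq_zero (hhom : P.IsHomogeneous α) (d : ℕ) (g : V d)
    (h : Sfun α P d (Tfun α P d g) = 0) : Tfun α P d g = 0 := by
  apply eq_zero_of_B_self (d + α) (Tfun α P d g)
  rw [adjoint_id α P hhom d g (Tfun α P d g), h, B_zero_right]

lemma S_eq_zero (hhom : P.IsHomogeneous α) (d : ℕ) (h : V (d + α))
    (hh : Tfun α P d (Sfun α P d h) = 0) : Sfun α P d h = 0 := by
  apply eq_zero_of_B_self d (Sfun α P d h)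
  rw [← adjoint_id α P hhom d (Sfun α P d h) h, hh]
  unfold B
  apply Finset.sum_eq_zero
  intro e _
  simp [Pi.zero_apply]

lemma exists_vh (hhom : P.IsHomogeneous α) (d : ℕ) (w : V (d + α)) :
    ∃ g h, w = Tfun α P d g + h ∧ Sfun α P d h = 0 :=
  decomp_aux (Tlin α P d) (Slin α P d)
    (fun v hv => T_eq_zero α P hhom d v hv)
    (fun x hx => S_eq_zero α P hhom d x hx) w

lemma bridgeA (hhom : P.IsHomogeneous α) (d : ℕ) (G : Idx → ℂ) (E : Idx)
    (hE : degF E = d + α) :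
    ∑ p ∈ Finset.HasAntidiagonal.antidiagonal E, G p.1 * MvPolynomial.coeff p.2 P
      = Tfun α P d (fun e => G e.1) ⟨E, hE⟩ := by
  have expand : ∀ p ∈ Finset.HasAntidiagonal.antidiagonal E,
      G p.1 * MvPolynomial.coeff p.2 P
        = ∑ s ∈ P.support, if s = p.2 then G p.1 * MvPolynomial.coeff s P else 0 := by
    intro p _
    rw [Finset.sum_ite_eq' P.support p.2 (fun s => G p.1 * MvPolynomial.coeff s P)]
    by_cases hp : p.2 ∈ P.support
    · rw [if_pos hp]
    · rw [if_neg hp, MvPolynomial.notMem_support_iff.mp hp, mul_zero]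
  rw [Finset.sum_congr rfl expand, Finset.sum_comm]
  unfold Tfun
  refine Finset.sum_congr rfl fun s hs => ?_
  have hds : degF s = α := degF_support α P hhom hs
  by_cases hsE : s ≤ E
  · have hdeg : degF (E - s) = d := by
      have h1 : (E - s) + s = E := tsub_add_cancel_of_le hsE
      have h2 : degF (E - s) + degF s = degF E := by rw [← degF_add, h1]
      omega
    rw [dif_pos ⟨hsE, hdeg⟩]
    rw [Finset.sum_eq_single ((E - s, s) : Idx × Idx)]
    · rw [if_pos rfl]; ring
    · rintro p hp hne
      rw [Finset.HasAntidiagonal.mem_antidiagonal] at hp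
      rw [if_neg]
      intro heq
      apply hne
      have : p.1 = E - s := by rw [heq]; exact eq_tsub_of_add_eq hp
      rw [Prod.ext_iff]
      exact ⟨this, heq.symm⟩
    · intro hmem
      exact absurd (Finset.HasAntidiagonal.mem_antidiagonal.mpr (tsub_add_cancel_of_le hsE)) hmem
  · rw [dif_neg (fun hc => hsE hc.1), mul_zero]
    apply Finset.sum_eq_zero
    intro p hp
    rw [Finset.HasAntidiagonal.mem_antidiagonal] at hp
    rw [if_neg]
    intro heq
    exact hsE (by rw [← heq] at hp; exact hp ▸ le_add_self)

lemma bridgeB (hhom : P.IsHomogeneous α) (d : ℕ) (H : MvPowerSeries (Fin 3) ℂ)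
    (e : Idx) (he : degF e = d) :
    MvPowerSeries.coeff e (fischerStar P H)
      = Sfun α P d (fun E => MvPowerSeries.coeff E.1 H) ⟨e, he⟩ := by
  rw [MvPowerSeries.coeff_apply]
  unfold fischerStar Sfun wfac
  refine Finset.sum_congr rfl fun s hs => ?_
  have hds : degF s = α := degF_support α P hhom hs
  rw [dif_pos (show degF ((⟨e, he⟩ : {x : Idx // degF x = d}).1 + s) = d + α by
    rw [degF_add, he, hds])]

lemma mul_coe_lowdeg (hhom : P.IsHomogeneous α) (G : MvPowerSeries (Fin 3) ℂ)
    (E : Idx) (hE : degF E < α) :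
    MvPowerSeries.coeff E (G * (P : MvPowerSeries (Fin 3) ℂ)) = 0 := by
  rw [MvPowerSeries.coeff_mul]
  apply Finset.sum_eq_zero
  rintro p hp
  rw [Finset.HasAntidiagonal.mem_antidiagonal] at hp
  have h2 : MvPolynomial.coeff p.2 P = 0 := by
    by_contra hne
    have ha : degF p.2 = α := degF_support α P hhom (MvPolynomial.mem_support_iff.mpr hne)
    have hb : degF p.1 + degF p.2 = degF E := by rw [← degF_add, hp]
    omega
  rw [MvPolynomial.coeff_coe, h2, mul_zero]

lemma coeff_mul_coe (hhom : P.IsHomogeneous α) (G : MvPowerSeries (Fin 3) ℂ)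
    (d : ℕ) (E : Idx) (hE : degF E = d + α) :
    MvPowerSeries.coeff E (G * (P : MvPowerSeries (Fin 3) ℂ))
      = Tfun α P d (fun e => G e.1) ⟨E, hE⟩ := by
  rw [MvPowerSeries.coeff_mul, ← bridgeA α P hhom d (fun x => G x) E hE]
  refine Finset.sum_congr rfl fun p _ => ?_
  rw [MvPolynomial.coeff_coe, MvPowerSeries.coeff_apply]

lemma fischerStar_sub (H₁ H₂ : MvPowerSeries (Fin 3) ℂ) :
    fischerStar P (H₁ - H₂) = fischerStar P H₁ - fischerStar P H₂ := by
  funext e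
  show (∑ s ∈ P.support, (_ : ℂ)) = _
  rw [show (fischerStar P H₁ - fischerStar P H₂) e = fischerStar P H₁ e - fischerStar P H₂ e from rfl]
  unfold fischerStar
  rw [← Finset.sum_sub_distrib]
  refine Finset.sum_congr rfl fun s _ => ?_
  rw [map_sub]
  ring

end FischerAux

open FischerAux in
/-- **Fischer decomposition.**  Let `P(z,ξ,ν)` be a nonzero homogeneous polynomial of
degree `α ≥ 1` over `ℂ`.  Every formal power series `F ∈ ℂ[[z,ξ,ν]]` can be uniquely
decomposed as `F = G ⬝ P + H` with `G, H ∈ ℂ[[z,ξ,ν]]` and `P⋆(H) = 0`. -/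
theorem fischer_decomposition
    (α : ℕ) (hα : 1 ≤ α) (P : MvPolynomial (Fin 3) ℂ)
    (hP : P ≠ 0) (hhom : P.IsHomogeneous α)
    (F : MvPowerSeries (Fin 3) ℂ) :
    (∃ G H : MvPowerSeries (Fin 3) ℂ,
        F = G * (P : MvPowerSeries (Fin 3) ℂ) + H ∧ fischerStar P H = 0) ∧
    (∀ G₁ H₁ G₂ H₂ : MvPowerSeries (Fin 3) ℂ,
        F = G₁ * (P : MvPowerSeries (Fin 3) ℂ) + H₁ → fischerStar P H₁ = 0 →
        F = G₂ * (P : MvPowerSeries (Fin 3) ℂ) + H₂ → fischerStar P H₂ = 0 →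
        G₁ = G₂ ∧ H₁ = H₂) := by

  constructor
  · -- existence
    choose g h hgh hS using fun d =>
      exists_vh α P hhom d (fun E => MvPowerSeries.coeff E.1 F)
    set G : MvPowerSeries (Fin 3) ℂ := fun e => g (degF e) ⟨e, rfl⟩ with hGdef
    refine ⟨G, F - G * (P : MvPowerSeries (Fin 3) ℂ), by ring, ?_⟩
    have compG : ∀ (d : ℕ) (e : Idx) (hd : degF e = d), G e = g d ⟨e, hd⟩ := by
      intro d e hd; subst hd; rfl
    have compH : ∀ d : ℕ,
        (fun E : {x : Idx // degF x = d + α} =>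
          MvPowerSeries.coeff E.1 (F - G * (P : MvPowerSeries (Fin 3) ℂ))) = h d := by
      intro d
      funext E
      rw [map_sub, coeff_mul_coe α P hhom G d E.1 E.2]
      have h2 : (fun e : {x : Idx // degF x = d} => G e.1) = g d := by
        funext e; exact compG d e.1 e.2
      rw [h2]
      have h3 := congrFun (hgh d) E
      rw [Pi.add_apply] at h3
      show MvPowerSeries.coeff E.1 F - Tfun α P d (g d) E = h d E
      rw [h3]
      exact add_sub_cancel_left _ _
    apply MvPowerSeries.ext
    intro e
    rw [map_zero]
    calc MvPowerSeries.coeff e (fischerStar P (F - G * (P : MvPowerSeries (Fin 3) ℂ)))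
        = Sfun α P (degF e)
            (fun E => MvPowerSeries.coeff E.1
              (F - G * (P : MvPowerSeries (Fin 3) ℂ))) ⟨e, rfl⟩ :=
          bridgeB α P hhom (degF e) _ e rfl
      _ = Sfun α P (degF e) (h (degF e)) ⟨e, rfl⟩ := by rw [compH (degF e)]
      _ = 0 := congrFun (hS (degF e)) ⟨e, rfl⟩
  · -- uniqueness
    rintro G₁ H₁ G₂ H₂ hd₁ hs₁ hd₂ hs₂
    have hsum : G₁ * (P : MvPowerSeries (Fin 3) ℂ) + H₁
        = G₂ * (P : MvPowerSeries (Fin 3) ℂ) + H₂ := hd₁.symm.trans hd₂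
    have key : (G₁ - G₂) * (P : MvPowerSeries (Fin 3) ℂ) = H₂ - H₁ := by
      linear_combination hsum
    have star0 : fischerStar P ((G₁ - G₂) * (P : MvPowerSeries (Fin 3) ℂ)) = 0 := by
      rw [key, fischerStar_sub, hs₂, hs₁, sub_zero]
    have comp0 : ∀ E : Idx,
        MvPowerSeries.coeff E ((G₁ - G₂) * (P : MvPowerSeries (Fin 3) ℂ)) = 0 := by
      intro E
      by_cases hE : α ≤ degF E
      · have hE' : degF E = (degF E - α) + α := by omega
        set d := degF E - α with hd
        have hT : (fun E' : {x : Idx // degF x = d + α} =>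
            MvPowerSeries.coeff E'.1 ((G₁ - G₂) * (P : MvPowerSeries (Fin 3) ℂ)))
            = Tfun α P d (fun e => (G₁ - G₂) e.1) := by
          funext E'
          exact coeff_mul_coe α P hhom (G₁ - G₂) d E'.1 E'.2
        have hs' : Sfun α P d (Tfun α P d (fun e => (G₁ - G₂) e.1)) = 0 := by
          funext e'
          show Sfun α P d (Tfun α P d (fun e => (G₁ - G₂) e.1)) e' = (0 : ℂ)
          calc Sfun α P d (Tfun α P d (fun e => (G₁ - G₂) e.1)) e'
              = Sfun α P d (fun E' : {x : Idx // degF x = d + α} =>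
                  MvPowerSeries.coeff E'.1
                    ((G₁ - G₂) * (P : MvPowerSeries (Fin 3) ℂ))) e' := by rw [hT]
            _ = MvPowerSeries.coeff e'.1
                  (fischerStar P ((G₁ - G₂) * (P : MvPowerSeries (Fin 3) ℂ))) :=
                (bridgeB α P hhom d _ e'.1 e'.2).symm
            _ = 0 := by rw [star0, map_zero]
        have hT0 := T_eq_zero α P hhom d _ hs'
        have := congrFun hT0 ⟨E, hE'⟩
        rw [← hT] at this
        exact this
      · exact mul_coe_lowdeg α P hhom (G₁ - G₂) E (by omega)
    have hzero : (G₁ - G₂) * (P : MvPowerSeries (Fin 3) ℂ) = 0 := by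
      apply MvPowerSeries.ext
      intro n
      rw [map_zero]
      exact comp0 n
    have hPne : (P : MvPowerSeries (Fin 3) ℂ) ≠ 0 := by
      intro hc
      exact hP (MvPolynomial.coe_eq_zero_iff.mp hc)
    have hG12 : G₁ = G₂ := by
      rcases mul_eq_zero.mp hzero with h' | h'
      · exact sub_eq_zero.mp h'
      · exact absurd h' hPne
    refine ⟨hG12, ?_⟩
    rw [hG12] at hsum
    exact add_left_cancel hsum

end
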